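/- arXiv:math/0412236 — 3 statements merged into one kernel-verified Lean document; each statement's English description precedes it below -/
import Mathlib

section
/- For each fixed real p with 2 ≤ p < ∞ and fixed n ≥ 1, the ratio ‖z₁^k e^{-|z|²/2}‖_{L^p(ℝ^{2n})} / ‖z₁^k e^{-|z|²/2}‖_{L^2(ℝ^{2n})} is comparable, as k → ∞, to k^{(1/2)(1/p − 1/2)}; i.e., there exist constants c, C > 0 such that c·k^{(1/2)(1/p−1/2)} ≤ ratio ≤ C·k^{(1/2)(1/p−1/2)} for all k ≥ 1. -/
open MeasureTheory Complex Real

noncomputable section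

/-- Partial derivative in the `x_j` direction for functions on `ℂⁿ ≅ ℝ^{2n}`. -/
def pdx (n : ℕ) (j : Fin n) (f : (Fin n → ℂ) → ℂ) : (Fin n → ℂ) → ℂ :=
  fun z => fderiv ℝ f z (Pi.single j 1)

/-- Partial derivative in the `y_j` direction. -/
def pdy (n : ℕ) (j : Fin n) (f : (Fin n → ℂ) → ℂ) : (Fin n → ℂ) → ℂ :=
  fun z => fderiv ℝ f z (Pi.single j Complex.I)

/-- Wirtinger derivative `∂_{z_j} = (1/2)(∂_{x_j} - i ∂_{y_j})`. -/
def wz (n : ℕ) (j : Fin n) (f : (Fin n → ℂ) → ℂ) : (Fin n → ℂ) → ℂ :=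
  fun z => (1/2 : ℂ) * (pdx n j f z - Complex.I * pdy n j f z)

/-- Wirtinger derivative `∂_{z̄_j} = (1/2)(∂_{x_j} + i ∂_{y_j})`. -/
def wzb (n : ℕ) (j : Fin n) (f : (Fin n → ℂ) → ℂ) : (Fin n → ℂ) → ℂ :=
  fun z => (1/2 : ℂ) * (pdx n j f z + Complex.I * pdy n j f z)

/-- The operator `∂_{x_j} + i y_j`. -/
def Aop (n : ℕ) (j : Fin n) (f : (Fin n → ℂ) → ℂ) : (Fin n → ℂ) → ℂ :=
  fun z => pdx n j f z + Complex.I * ((z j).im : ℂ) * f z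

/-- The operator `∂_{y_j} - i x_j`. -/
def Bop (n : ℕ) (j : Fin n) (f : (Fin n → ℂ) → ℂ) : (Fin n → ℂ) → ℂ :=
  fun z => pdy n j f z - Complex.I * ((z j).re : ℂ) * f z

/-- The twisted Laplacian `L = -(1/2) Σ_j [(∂_{x_j}+iy_j)² + (∂_{y_j}-ix_j)²]`. -/
def twistedL (n : ℕ) (f : (Fin n → ℂ) → ℂ) : (Fin n → ℂ) → ℂ :=
  fun z => (-(1/2) : ℂ) * ∑ j : Fin n, (Aop n j (Aop n j f) z + Bop n j (Bop n j f) z)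

/-- `|z|² = Σ_j (x_j² + y_j²)`. -/
def normSq2 (n : ℕ) (z : Fin n → ℂ) : ℝ := ∑ j : Fin n, Complex.normSq (z j)

/-- The Gaussian `e^{-|z|²}`. -/
def gauss (n : ℕ) : (Fin n → ℂ) → ℂ := fun z => Complex.exp (-(normSq2 n z : ℂ))

/-- Iterated Wirtinger derivative `∂_z^α`. -/
def wzMulti (n : ℕ) (α : Fin n → ℕ) (f : (Fin n → ℂ) → ℂ) : (Fin n → ℂ) → ℂ :=
  (List.finRange n).foldr (fun j g => (wz n j)^[α j] g) f

/-- Iterated Wirtinger derivative `∂_{z̄}^β`. -/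
def wzbMulti (n : ℕ) (β : Fin n → ℕ) (f : (Fin n → ℂ) → ℂ) : (Fin n → ℂ) → ℂ :=
  (List.finRange n).foldr (fun j g => (wzb n j)^[β j] g) f

/-- The eigenfunctions `f_{α,β} = (-1)^{|α|+|β|} e^{|z|²/2} ∂_z^α ∂_{z̄}^β e^{-|z|²}`. -/
def fab (n : ℕ) (α β : Fin n → ℕ) : (Fin n → ℂ) → ℂ :=
  fun z => (-1 : ℂ) ^ ((∑ j, α j) + (∑ j, β j)) * Complex.exp ((normSq2 n z : ℂ) / 2) *
    wzMulti n α (wzbMulti n β (gauss n)) z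

/-- The unsigned diagonal eigenfunctions `f_{α,α} = e^{|z|²/2} ∂_z^α ∂_{z̄}^α e^{-|z|²}`. -/
def faa (n : ℕ) (α : Fin n → ℕ) : (Fin n → ℂ) → ℂ :=
  fun z => Complex.exp ((normSq2 n z : ℂ) / 2) * wzMulti n α (wzbMulti n α (gauss n)) z

/-- The Euclidean Laplacian on `ℝ^{2n}`. -/
def lap (n : ℕ) (f : (Fin n → ℂ) → ℂ) : (Fin n → ℂ) → ℂ :=
  fun z => ∑ j : Fin n, (pdx n j (pdx n j f) z + pdy n j (pdy n j f) z)

/-- The radial eigenfunctions `f_k = e^{|z|²/2} Δ^k e^{-|z|²}`. -/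
def fk (n : ℕ) (k : ℕ) : (Fin n → ℂ) → ℂ :=
  fun z => Complex.exp ((normSq2 n z : ℂ) / 2) * ((lap n)^[k] (gauss n)) z

/-- The operator `D_j = 2∂_{z̄_j} + z_j`. -/
def Dop (n : ℕ) (j : Fin n) (f : (Fin n → ℂ) → ℂ) : (Fin n → ℂ) → ℂ :=
  fun z => 2 * wzb n j f z + z j * f z

/-- The operator `D_j* = -2∂_{z_j} + z̄_j`. -/
def Dstar (n : ℕ) (j : Fin n) (f : (Fin n → ℂ) → ℂ) : (Fin n → ℂ) → ℂ :=
  fun z => -2 * wz n j f z + (starRingEnd ℂ) (z j) * f z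

/-- The `L^p` norm over `ℝ^{2n} ≅ ℂⁿ`. -/
def Lpn (n : ℕ) (p : ℝ) (f : (Fin n → ℂ) → ℂ) : ℝ :=
  (∫ z : Fin n → ℂ, ‖f z‖ ^ p) ^ (1/p)

end

/-!
The `L^q` norm of `z₁^k e^{-|z|²/2}` factorises over the coordinates into one-dimensional
Gaussian moments: `∫ |z₁|^{kq} e^{-q|z|²/2} = (2π/q)^n (2/q)^{kq/2} Γ(kq/2 + 1)`. The ratio of
norms is therefore an explicit quotient of Gamma values, and Stirling's formula
`log Γ(s + 1) = s log s - s + (log s)/2 + O(1)`, uniform in real `s ≥ 1`, turns its logarithm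
into `(1/2)(1/p - 1/2) log k + O(1)`. The real-variable Stirling bound comes from the factorial
one, by log-convexity of `Γ` between consecutive integers.
-/

open scoped Nat

namespace Real

noncomputable def logStirling (s : ℝ) : ℝ := s * log s - s + log s / 2

lemma logStirling_le_log_factorial {m : ℕ} (hm : m ≠ 0) : logStirling m ≤ log m ! := by
  have hstirling := Stirling.le_log_factorial_stirling hm
  have h2π : 0 ≤ log (2 * π) := log_nonneg (by nlinarith [pi_gt_three])
  unfold logStirling
  linarith

lemma log_factorial_le_logStirling_add_one {m : ℕ} (hm : m ≠ 0) :
    log m ! ≤ logStirling m + 1 := by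
  have hm0 : (0 : ℝ) < m := by positivity
  have hseq : Stirling.stirlingSeq m ≤ exp 1 / √2 := by
    obtain ⟨j, rfl⟩ := Nat.exists_eq_succ_of_ne_zero hm
    simpa [Stirling.stirlingSeq_one] using Stirling.stirlingSeq'_antitone (Nat.zero_le j)
  have hlog := log_le_log ((sqrt_pos.2 pi_pos).trans_le (Stirling.sqrt_pi_le_stirlingSeq hm)) hseq
  rw [Stirling.stirlingSeq, log_div (by positivity) (by positivity),
    log_mul (by positivity) (by positivity), log_sqrt (by positivity), log_pow,
    log_div hm0.ne' (exp_pos 1).ne', log_exp, log_div (exp_pos 1).ne' (by positivity), log_exp,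
    log_sqrt zero_le_two, log_mul two_ne_zero hm0.ne'] at hlog
  unfold logStirling
  linarith

lemma log_Gamma_add_one {y : ℝ} (hy : 0 < y) :
    (log ∘ Gamma) (y + 1) = (log ∘ Gamma) y + log y := by
  simp only [Function.comp_apply]
  rw [Gamma_add_one hy.ne', log_mul hy.ne' (Gamma_pos_of_pos hy).ne', add_comm]

lemma logStirling_sub_bounds {m s : ℝ} (hm : 1 ≤ m) (hms : m ≤ s) (hsm : s ≤ m + 1) :
    -1 ≤ logStirling s - logStirling m - (s - m) * log m ∧
      logStirling s - logStirling m - (s - m) * log m ≤ 3 / 2 := by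
  have hm0 : 0 < m := by linarith
  set ℓ := log s - log m
  have hℓ0 : 0 ≤ ℓ := sub_nonneg.2 (log_le_log hm0 hms)
  have hℓt : m * ℓ ≤ s - m := by
    have := log_le_sub_one_of_pos (div_pos (hm0.trans_le hms) hm0)
    rw [log_div (by linarith) hm0.ne', div_sub_one hm0.ne', le_div_iff₀ hm0] at this
    linarith
  have hid : logStirling s - logStirling m - (s - m) * log m = s * ℓ - (s - m) + ℓ / 2 := by
    unfold logStirling; ring
  rw [hid]
  constructor
  · nlinarith
  · nlinarith

theorem abs_log_Gamma_add_one_sub_logStirling_le {s : ℝ} (hs : 1 ≤ s) :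
    |log (Gamma (s + 1)) - logStirling s| ≤ 3 := by
  set m := ⌊s⌋₊
  have hm : m ≠ 0 := (Nat.floor_pos.2 hs).ne'
  have hm1 : (1 : ℝ) ≤ m := by exact_mod_cast Nat.one_le_iff_ne_zero.2 hm
  have hms : (m : ℝ) ≤ s := Nat.floor_le (by linarith)
  have hsm : s ≤ m + 1 := (Nat.lt_floor_add_one s).le
  have hs1 : s + 1 = (m : ℝ) + 1 + (s - m) := by ring
  have hΓm : (log ∘ Gamma) ((m : ℝ) + 1) = log m ! := by simp [Gamma_nat_eq_factorial]
  have upper : log (Gamma (s + 1)) ≤ log m ! + (s - m) * log (m + 1) := by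
    rcases hms.eq_or_lt with h | h
    · simp [← h, Gamma_nat_eq_factorial]
    have := BohrMollerup.f_add_nat_le convexOn_log_Gamma log_Gamma_add_one (n := m + 1)
      (Nat.succ_ne_zero m) (sub_pos.2 h) (by linarith)
    push_cast at this
    rwa [hΓm, ← hs1] at this
  have lower : log m ! + (s - m) * log m ≤ log (Gamma (s + 1)) := by
    rcases hms.eq_or_lt with h | h
    · simp [← h, Gamma_nat_eq_factorial]
    have := BohrMollerup.f_add_nat_ge convexOn_log_Gamma log_Gamma_add_one (n := m + 1)
      (by omega) (sub_pos.2 h)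
    push_cast at this
    rwa [hΓm, add_sub_cancel_right, ← hs1] at this
  have hlog_succ : log (m + 1) ≤ log m + 1 := by
    have := log_le_sub_one_of_pos (show 0 < ((m : ℝ) + 1) / m by positivity)
    rw [log_div (by positivity) (by positivity)] at this
    have : ((m : ℝ) + 1) / m - 1 ≤ 1 := by
      rw [div_sub_one (by positivity), div_le_one (by positivity)]; linarith
    linarith
  have ht : s - m ≤ 1 := by linarith
  have hinterp := mul_le_mul_of_nonneg_left hlog_succ (sub_nonneg.2 hms)
  obtain ⟨hφ₁, hφ₂⟩ := logStirling_sub_bounds hm1 hms hsm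
  have hfact₁ := logStirling_le_log_factorial hm
  have hfact₂ := log_factorial_le_logStirling_add_one hm
  rw [abs_le]
  constructor <;> linarith

end Real

section GaussianMoments

variable {n : ℕ}

open Real

lemma norm_monomial_mul_gaussian_rpow (j₀ : Fin n) (k : ℕ) (q : ℝ) (z : Fin n → ℂ) :
    ‖(z j₀) ^ k * Complex.exp (-(normSq2 n z : ℂ) / 2)‖ ^ q =
      ∏ j, ‖z j‖ ^ (Pi.single j₀ ((k : ℝ) * q) : Fin n → ℝ) j *
        rexp (-(q / 2) * ‖z j‖ ^ (2 : ℝ)) := by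
  rw [Finset.prod_mul_distrib, Fintype.prod_eq_single j₀ (fun j hj => by simp [hj]),
    Pi.single_eq_same, ← Real.exp_sum, norm_mul, norm_pow, Complex.norm_exp,
    mul_rpow (by positivity) (by positivity), ← rpow_natCast, ← rpow_mul (norm_nonneg _),
    ← Real.exp_mul]
  congr 2
  simp only [normSq2, Complex.ofReal_sum, Complex.div_ofNat_re, Complex.neg_re, Complex.re_sum,
    Complex.ofReal_re, rpow_ofNat, Complex.sq_norm, neg_mul, Finset.sum_neg_distrib,
    ← Finset.mul_sum]
  ring

lemma integral_norm_rpow_mul_gaussian {r q : ℝ} (hr : 0 ≤ r) (hq : 0 < q) :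
    ∫ w : ℂ, ‖w‖ ^ r * rexp (-(q / 2) * ‖w‖ ^ (2 : ℝ)) =
      rexp (Real.log π - (r / 2 + 1) * Real.log (q / 2) + Real.log (Real.Gamma (r / 2 + 1))) := by
  have hΓ : 0 < Real.Gamma (r / 2 + 1) := Gamma_pos_of_pos (by positivity)
  rw [Complex.integral_rpow_mul_exp_neg_mul_rpow one_le_two (by linarith) (by positivity),
    Real.exp_add, Real.exp_sub, Real.exp_log pi_pos, Real.exp_log hΓ, mul_comm _ (Real.log _),
    ← rpow_def_of_pos (by positivity), show -(r + 2) / 2 = -(r / 2 + 1) by ring,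
    rpow_neg (by positivity), show (r + 2) / 2 = r / 2 + 1 by ring]
  ring

theorem Lpn_monomial_mul_gaussian (j₀ : Fin n) (k : ℕ) {q : ℝ} (hq : 0 < q) :
    Lpn n q (fun z => (z j₀) ^ k * Complex.exp (-(normSq2 n z : ℂ) / 2)) =
      rexp ((n * Real.log π - (k * q / 2 + n) * Real.log (q / 2) +
        Real.log (Real.Gamma (k * q / 2 + 1))) / q) := by
  set r : Fin n → ℝ := Pi.single j₀ ((k : ℝ) * q)
  have hr : 0 ≤ r := Pi.single_nonneg.2 (by positivity)
  have hfactor : ∀ j, ∫ w : ℂ, ‖w‖ ^ r j * rexp (-(q / 2) * ‖w‖ ^ (2 : ℝ)) =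
      rexp (Real.log π - Real.log (q / 2) +
        (Pi.single j₀ (Real.log (Real.Gamma (k * q / 2 + 1)) - k * q / 2 * Real.log (q / 2)) :
          Fin n → ℝ) j) := by
    intro j
    rw [integral_norm_rpow_mul_gaussian (hr j) hq]
    congr 1
    rcases eq_or_ne j j₀ with rfl | hj
    · simp only [r, Pi.single_eq_same]; ring
    · simp [r, hj]
  simp_rw [Lpn, norm_monomial_mul_gaussian_rpow, volume_pi]
  rw [integral_fintype_prod_eq_prod
    (fun j w => ‖w‖ ^ r j * rexp (-(q / 2) * ‖w‖ ^ (2 : ℝ)))]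
  simp_rw [hfactor]
  rw [← Real.exp_sum, ← Real.exp_mul, Finset.sum_add_distrib, Finset.sum_pi_single']
  simp only [Finset.sum_sub_distrib, Finset.sum_const, Finset.card_univ, Fintype.card_fin,
    nsmul_eq_mul, Finset.mem_univ, ↓reduceIte, one_div, Real.exp_eq_exp]
  ring

theorem Lpn_ratio_monomial_mul_gaussian (j₀ : Fin n) {k : ℕ} (hk : k ≠ 0) {p : ℝ}
    (hp : 0 < p) :
    Lpn n p (fun z => (z j₀) ^ k * Complex.exp (-(normSq2 n z : ℂ) / 2)) /
        Lpn n 2 (fun z => (z j₀) ^ k * Complex.exp (-(normSq2 n z : ℂ) / 2)) =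
      rexp ((n * (Real.log π - Real.log (p / 2)) + Real.log (p / 2) / 2) / p -
        n * Real.log π / 2 +
        Real.log k * (1 / 2 * (1 / p - 1 / 2)) +
        ((Real.log (Real.Gamma (k * p / 2 + 1)) - logStirling (k * p / 2)) / p -
          (Real.log (Real.Gamma (k + 1)) - logStirling k) / 2)) := by
  have hk0 : (0 : ℝ) < k := by positivity
  rw [Lpn_monomial_mul_gaussian _ _ hp, Lpn_monomial_mul_gaussian _ _ two_pos, ← Real.exp_sub]
  congr 1
  rw [div_self two_ne_zero, Real.log_one, mul_div_cancel_right₀ _ two_ne_zero]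
  unfold logStirling
  rw [mul_div_assoc, Real.log_mul hk0.ne' (by positivity)]
  field_simp
  ring

end GaussianMoments

theorem stmt3 (n : ℕ) (hn : 0 < n) (p : ℝ) (hp2 : 2 ≤ p) :
    ∃ c C : ℝ, 0 < c ∧ 0 < C ∧ ∀ k : ℕ, 1 ≤ k →
      c * (k : ℝ) ^ ((1/2 : ℝ) * (1/p - 1/2)) ≤
        Lpn n p (fun z => (z ⟨0, hn⟩) ^ k * Complex.exp (-(normSq2 n z : ℂ) / 2)) /
          Lpn n 2 (fun z => (z ⟨0, hn⟩) ^ k * Complex.exp (-(normSq2 n z : ℂ) / 2)) ∧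
      Lpn n p (fun z => (z ⟨0, hn⟩) ^ k * Complex.exp (-(normSq2 n z : ℂ) / 2)) /
          Lpn n 2 (fun z => (z ⟨0, hn⟩) ^ k * Complex.exp (-(normSq2 n z : ℂ) / 2)) ≤
        C * (k : ℝ) ^ ((1/2 : ℝ) * (1/p - 1/2)) := by
  have hp : 0 < p := by linarith
  set K := (n * (Real.log π - Real.log (p / 2)) + Real.log (p / 2) / 2) / p - n * Real.log π / 2
    with hK
  refine ⟨Real.exp (K - 3), Real.exp (K + 3), Real.exp_pos _, Real.exp_pos _, fun k hk => ?_⟩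
  have hk1 : (1 : ℝ) ≤ k := by exact_mod_cast hk
  have hE₁ := Real.abs_log_Gamma_add_one_sub_logStirling_le (s := k * p / 2) (by nlinarith)
  have hE₂ := Real.abs_log_Gamma_add_one_sub_logStirling_le hk1
  have hE : |(Real.log (Real.Gamma (k * p / 2 + 1)) - Real.logStirling (k * p / 2)) / p -
      (Real.log (Real.Gamma (k + 1)) - Real.logStirling k) / 2| ≤ 3 := by
    refine (abs_sub _ _).trans ?_
    rw [abs_div, abs_div, abs_of_pos hp, abs_two]
    linarith [div_le_div₀ (by norm_num) hE₁ two_pos hp2,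
      div_le_div₀ (by norm_num) hE₂ two_pos le_rfl]
  rw [Lpn_ratio_monomial_mul_gaussian _ (by omega) hp, Real.rpow_def_of_pos (by positivity),
    ← Real.exp_add, ← Real.exp_add, Real.exp_le_exp, Real.exp_le_exp]
  constructor <;> linarith [abs_le.1 hE, hK]
end

section
/- For multi-indices α, β ∈ ℕ^n, the function f_{α,β}(z) = (−1)^{|α|+|β|} e^{|z|²/2} ∂_z^α ∂_{z̄}^β e^{−|z|²} on ℂ^n satisfies L f_{α,β} = (n + 2|α|) f_{α,β}, where L is the twisted Laplacian. -/
open MeasureTheory Complex Real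

/-!
Conjugating by the weight `e^{|z|²/2}` turns `L` into `L' = Σ_j (1 - 2 ∂_j (∂̄_j + z_j))`.
The Gaussian `e^{-|z|²}` is annihilated by every `∂̄_j + z_j`, so it is an `L'`-eigenfunction
with eigenvalue `n`. Each `∂̄_k` commutes with `∂_j` and with `∂̄_j + z_j`, hence with `L'`, while
`[∂_k, ∂̄_j + z_j] = δ_{jk}` gives `L' ∂_k = ∂_k L' + 2 ∂_k`. So `∂_z^α ∂_{z̄}^β` maps the Gaussian
to an `L'`-eigenfunction with eigenvalue `n + 2|α|`; the sign in `f_{α,β}` is a constant factor.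
-/

open scoped ContDiff

namespace TwistedLaplacian

variable {n : ℕ} {f g h : (Fin n → ℂ) → ℂ}

noncomputable def wirt (j : Fin n) (s : ℂ) (f : (Fin n → ℂ) → ℂ) : (Fin n → ℂ) → ℂ :=
  fun z => (1 / 2 : ℂ) * (pdx n j f z + s * pdy n j f z)

lemma wz_eq_wirt (j : Fin n) : wz n j = wirt j (-I) := by
  ext f z; simp only [wz, wirt]; ring

lemma wzb_eq_wirt (j : Fin n) : wzb n j = wirt j I := rfl

lemma pdx_eq_wz_add_wzb (j : Fin n) (f : (Fin n → ℂ) → ℂ) :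
    pdx n j f = fun z => wz n j f z + wzb n j f z := by
  ext z; simp only [wz, wzb]; ring

lemma pdy_eq_wz_sub_wzb (j : Fin n) (f : (Fin n → ℂ) → ℂ) :
    pdy n j f = fun z => I * (wz n j f z - wzb n j f z) := by
  ext z; simp only [wz, wzb]; linear_combination pdy n j f z * I_sq

lemma normSq2_eq_sum_norm_sq : normSq2 n = fun z => ∑ k, ‖z k‖ ^ 2 := by
  ext; simp [normSq2, Complex.normSq_eq_norm_sq]

@[fun_prop]
lemma contDiff_ofReal {m : WithTop ℕ∞} : ContDiff ℝ m ((↑) : ℝ → ℂ) := ofRealCLM.contDiff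

@[fun_prop]
lemma contDiff_normSq2 : ContDiff ℝ ∞ (normSq2 n) := by
  rw [normSq2_eq_sum_norm_sq]
  exact ContDiff.sum fun k _ => (contDiff_norm_sq ℝ).comp (contDiff_apply ℝ ℂ k)

@[fun_prop]
lemma contDiff_pdx (hf : ContDiff ℝ ∞ f) (j : Fin n) : ContDiff ℝ ∞ (pdx n j f) :=
  (hf.fderiv_right (by simp)).clm_apply contDiff_const

@[fun_prop]
lemma contDiff_pdy (hf : ContDiff ℝ ∞ f) (j : Fin n) : ContDiff ℝ ∞ (pdy n j f) :=
  (hf.fderiv_right (by simp)).clm_apply contDiff_const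

@[fun_prop]
lemma contDiff_wirt (hf : ContDiff ℝ ∞ f) (j : Fin n) (s : ℂ) : ContDiff ℝ ∞ (wirt j s f) := by
  unfold wirt; fun_prop

section Calculus

variable (j : Fin n) (s : ℂ)

lemma wirt_add (hf : Differentiable ℝ f) (hg : Differentiable ℝ g) :
    wirt j s (fun z => f z + g z) = fun z => wirt j s f z + wirt j s g z := by
  ext z; simp only [wirt, pdx, pdy, fderiv_fun_add (hf z) (hg z), add_apply]; ring

lemma wirt_sub (hf : Differentiable ℝ f) (hg : Differentiable ℝ g) :
    wirt j s (fun z => f z - g z) = fun z => wirt j s f z - wirt j s g z := by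
  ext z; simp only [wirt, pdx, pdy, fderiv_fun_sub (hf z) (hg z), sub_apply]; ring

lemma wirt_const_mul (hf : Differentiable ℝ f) (c : ℂ) :
    wirt j s (fun z => c * f z) = fun z => c * wirt j s f z := by
  ext z; simp only [wirt, pdx, pdy, fderiv_const_mul (hf z), smul_apply, smul_eq_mul]; ring

lemma wirt_mul (hf : Differentiable ℝ f) (hg : Differentiable ℝ g) :
    wirt j s (fun z => f z * g z) = fun z => f z * wirt j s g z + g z * wirt j s f z := by
  ext z
  simp only [wirt, pdx, pdy, fderiv_fun_mul (hf z) (hg z), add_apply, smul_apply, smul_eq_mul]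
  ring

lemma wirt_sum {ι : Type*} (t : Finset ι) {F : ι → (Fin n → ℂ) → ℂ}
    (hF : ∀ i ∈ t, Differentiable ℝ (F i)) :
    wirt j s (fun z => ∑ i ∈ t, F i z) = fun z => ∑ i ∈ t, wirt j s (F i) z := by
  ext z
  simp only [wirt, pdx, pdy, fderiv_fun_sum fun i hi => hF i hi z, sum_apply, Finset.mul_sum,
    ← Finset.sum_add_distrib]

lemma wirt_const (c : ℂ) : wirt j s (fun _ => c) = fun _ => 0 := by
  ext z; simp [wirt, pdx, pdy]

lemma wirt_coord (k : Fin n) :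
    wirt j s (fun z => z k) = fun _ => if k = j then (1 + s * I) / 2 else 0 := by
  ext z
  have hd : fderiv ℝ (fun z : Fin n → ℂ => z k) z = ContinuousLinearMap.proj k :=
    (ContinuousLinearMap.proj (R := ℝ) (φ := fun _ : Fin n => ℂ) k).fderiv
  simp only [wirt, pdx, pdy, hd, ContinuousLinearMap.proj_apply, Pi.single_apply]
  split_ifs <;> ring

lemma wirt_cexp (hf : Differentiable ℝ f) :
    wirt j s (fun z => cexp (f z)) = fun z => cexp (f z) * wirt j s f z := by
  ext z
  simp only [wirt, pdx, pdy, ((hf z).hasFDerivAt.cexp).fderiv, smul_apply, smul_eq_mul]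
  ring

lemma wirt_normSq2 : wirt j s (fun z => (normSq2 n z : ℂ)) = fun z => (z j).re + s * (z j).im := by
  ext z
  have hd : HasFDerivAt (normSq2 n)
      (∑ k, 2 • (innerSL ℝ (z k)).comp (ContinuousLinearMap.proj k)) z := by
    rw [normSq2_eq_sum_norm_sq]
    exact HasFDerivAt.fun_sum fun k _ =>
      (ContinuousLinearMap.proj (R := ℝ) (φ := fun _ : Fin n => ℂ) k).hasFDerivAt.norm_sq
  have hd' : HasFDerivAt (fun z => (normSq2 n z : ℂ)) _ z := ofRealCLM.hasFDerivAt.comp z hd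
  simp only [wirt, pdx, pdy, hd'.fderiv]
  simp [Pi.single_apply, Complex.inner, apply_ite]
  ring

lemma wirt_cexp_mul_normSq2 (c : ℂ) :
    wirt j s (fun z => cexp (c * normSq2 n z)) =
      fun z => c * ((z j).re + s * (z j).im) * cexp (c * normSq2 n z) := by
  simp (disch := fun_prop (disch := simp)) only [wirt_cexp, wirt_const_mul, wirt_normSq2]
  ext z; ring

end Calculus

lemma wirt_comm (hf : ContDiff ℝ 2 f) (j k : Fin n) (s t : ℂ) :
    wirt j s (wirt k t f) = wirt k t (wirt j s f) := by
  have hd : Differentiable ℝ (fderiv ℝ f) :=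
    (hf.fderiv_right (m := 1) (by norm_num)).differentiable (by simp)
  have hw (z : Fin n → ℂ) (i : Fin n) (u : ℂ) (v : Fin n → ℂ) : fderiv ℝ (wirt i u f) z v =
      (1 / 2 : ℂ) * (fderiv ℝ (fderiv ℝ f) z v (Pi.single i 1)
        + u * fderiv ℝ (fderiv ℝ f) z v (Pi.single i I)) := by
    have hpd (w : Fin n → ℂ) := (hd z).hasFDerivAt.clm_apply (hasFDerivAt_const w z)
    rw [(show HasFDerivAt (wirt i u f) _ z from
      ((hpd _).fun_add ((hpd _).const_mul u)).const_mul (1 / 2 : ℂ)).fderiv]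
    simp; ring
  ext z
  have hsymm : IsSymmSndFDerivAt ℝ f z :=
    hf.contDiffAt.isSymmSndFDerivAt (by simp [minSmoothness_of_isRCLikeNormedField])
  change (1 / 2 : ℂ) * (pdx n j (wirt k t f) z + s * pdy n j (wirt k t f) z)
    = (1 / 2 : ℂ) * (pdx n k (wirt j s f) z + t * pdy n k (wirt j s f) z)
  simp only [pdx, pdy, hw, hsymm _ (Pi.single k _)]
  ring

noncomputable def annih (j : Fin n) (h : (Fin n → ℂ) → ℂ) : (Fin n → ℂ) → ℂ :=
  fun z => wzb n j h z + z j * h z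

@[fun_prop]
lemma contDiff_annih (hh : ContDiff ℝ ∞ h) (j : Fin n) : ContDiff ℝ ∞ (annih j h) := by
  unfold annih wzb; fun_prop

lemma wzb_annih (hh : ContDiff ℝ ∞ h) (j k : Fin n) :
    wzb n k (annih j h) = annih j (wzb n k h) := by
  unfold annih
  simp only [wzb_eq_wirt]
  simp (disch := fun_prop (disch := simp)) only [wirt_add, wirt_mul, wirt_coord]
  rw [wirt_comm (hh.of_le ENat.LEInfty.out) k j]
  ext z; simp

lemma wz_annih (hh : ContDiff ℝ ∞ h) (j k : Fin n) :
    wz n k (annih j h) = fun z => annih j (wz n k h) z + (if j = k then 1 else 0) * h z := by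
  unfold annih
  simp only [wzb_eq_wirt, wz_eq_wirt]
  simp (disch := fun_prop (disch := simp)) only [wirt_add, wirt_mul, wirt_coord]
  rw [wirt_comm (hh.of_le ENat.LEInfty.out) k j]
  ext z; simp; ring

lemma annih_gauss (j : Fin n) : annih j (gauss n) = fun _ => 0 := by
  have hg : gauss n = fun z => cexp ((-1) * normSq2 n z) := by ext; simp [gauss]
  unfold annih
  rw [wzb_eq_wirt, hg, wirt_cexp_mul_normSq2]
  ext z
  linear_combination (-cexp (-1 * normSq2 n z)) * re_add_im (z j)

noncomputable def conjTwistedL (h : (Fin n → ℂ) → ℂ) : (Fin n → ℂ) → ℂ :=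
  fun z => ∑ j, (h z - 2 * wz n j (annih j h) z)

lemma conjTwistedL_gauss : conjTwistedL (gauss n) = fun z => n * gauss n z := by
  unfold conjTwistedL
  simp only [annih_gauss, wz_eq_wirt, wirt_const]
  ext z; simp

lemma conjTwistedL_wzb (hh : ContDiff ℝ ∞ h) (k : Fin n) :
    conjTwistedL (wzb n k h) = wzb n k (conjTwistedL h) := by
  have hcomm (j : Fin n) :
      wirt k I (wirt j (-I) (annih j h)) = wirt j (-I) (annih j (wirt k I h)) := by
    rw [wirt_comm ((contDiff_annih hh j).of_le ENat.LEInfty.out) k j]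
    exact congrArg (wirt j (-I)) (wzb_annih hh j k)
  unfold conjTwistedL
  simp only [wz_eq_wirt, wzb_eq_wirt]
  simp (disch := fun_prop (disch := simp)) only [wirt_sum, wirt_sub, wirt_const_mul, hcomm]

lemma conjTwistedL_wz (hh : ContDiff ℝ ∞ h) (k : Fin n) :
    conjTwistedL (wz n k h) = fun z => wz n k (conjTwistedL h) z + 2 * wz n k h z := by
  have hcomm (j : Fin n) : wirt k (-I) (wirt j (-I) (annih j h)) = fun z =>
      wirt j (-I) (annih j (wirt k (-I) h)) z + (if j = k then 1 else 0) * wirt j (-I) h z := by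
    have hwz := wz_annih hh j k
    rw [wz_eq_wirt] at hwz
    rw [wirt_comm ((contDiff_annih hh j).of_le ENat.LEInfty.out) k j, hwz]
    simp (disch := fun_prop (disch := simp)) only [wirt_add, wirt_const_mul]
  unfold conjTwistedL
  simp only [wz_eq_wirt]
  simp (disch := fun_prop (disch := simp)) only [wirt_sum, wirt_sub, wirt_const_mul, hcomm]
  ext z
  simp [Finset.sum_add_distrib, mul_add, Finset.sum_sub_distrib]
  ring

lemma Aop_weight_mul (hh : Differentiable ℝ h) (c : ℂ) (j : Fin n) :
    Aop n j (fun z => c * cexp (normSq2 n z / 2) * h z) =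
      fun z => c * cexp (normSq2 n z / 2) * (pdx n j h z + z j * h z) := by
  unfold Aop
  simp only [pdx_eq_wz_add_wzb, wz_eq_wirt, wzb_eq_wirt, div_eq_inv_mul]
  simp (disch := fun_prop (disch := simp)) only [wirt_mul, wirt_const, wirt_cexp_mul_normSq2]
  ext z
  linear_combination (c * cexp (2⁻¹ * normSq2 n z) * h z) * re_add_im (z j)

lemma Bop_weight_mul (hh : Differentiable ℝ h) (c : ℂ) (j : Fin n) :
    Bop n j (fun z => c * cexp (normSq2 n z / 2) * h z) =
      fun z => c * cexp (normSq2 n z / 2) * (pdy n j h z - I * z j * h z) := by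
  unfold Bop
  simp only [pdy_eq_wz_sub_wzb, wz_eq_wirt, wzb_eq_wirt, div_eq_inv_mul]
  simp (disch := fun_prop (disch := simp)) only [wirt_mul, wirt_const, wirt_cexp_mul_normSq2]
  ext z
  linear_combination (-I * c * cexp (2⁻¹ * normSq2 n z) * h z) * re_add_im (z j)

/-- With `A = ∂̄_j + z_j` one has `∂_{x_j} + z_j = ∂_j + A` and `∂_{y_j} - i z_j = i (∂_j - A)`,
so the sum of their squares is `2 (∂_j A + A ∂_j) = 4 ∂_j A - 2`. -/
lemma Aop_Aop_add_Bop_Bop_weight_mul (hh : ContDiff ℝ ∞ h) (c : ℂ) (j : Fin n) :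
    (fun z => Aop n j (Aop n j (fun z => c * cexp (normSq2 n z / 2) * h z)) z
      + Bop n j (Bop n j (fun z => c * cexp (normSq2 n z / 2) * h z)) z)
    = fun z => -2 * (c * cexp (normSq2 n z / 2)) * (h z - 2 * wz n j (annih j h) z) := by
  simp (disch := fun_prop (disch := simp)) only [Aop_weight_mul, Bop_weight_mul]
  unfold annih
  simp only [pdx_eq_wz_add_wzb, pdy_eq_wz_sub_wzb, wz_eq_wirt, wzb_eq_wirt]
  simp (disch := fun_prop (disch := simp)) only [wirt_add, wirt_sub, wirt_mul, wirt_coord,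
    wirt_const]
  rw [wirt_comm (hh.of_le ENat.LEInfty.out) j j I (-I)]
  ext z
  simp only [if_true]
  ring_nf
  simp only [I_sq, I_pow_four]
  ring

lemma twistedL_weight_mul (hh : ContDiff ℝ ∞ h) (c : ℂ) :
    twistedL n (fun z => c * cexp (normSq2 n z / 2) * h z) =
      fun z => c * cexp (normSq2 n z / 2) * conjTwistedL h z := by
  ext z
  unfold twistedL conjTwistedL
  rw [Finset.sum_congr rfl fun j _ => congrFun (Aop_Aop_add_Bop_Bop_weight_mul hh c j) z,
    ← Finset.mul_sum]
  ring

lemma iterate_of_shift {X M : Type*} [AddMonoid M] {P : M → X → Prop} {D : X → X} {c : M}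
    (hD : ∀ μ x, P μ x → P (μ + c) (D x)) (k : ℕ) {μ : M} {x : X} (hx : P μ x) :
    P (μ + k • c) (D^[k] x) := by
  induction k with
  | zero => simpa using hx
  | succ k ih => rw [Function.iterate_succ_apply', succ_nsmul, ← add_assoc]; exact hD _ _ ih

lemma foldr_iterate_of_shift {ι X M : Type*} [AddCommMonoid M] {P : M → X → Prop}
    {D : ι → X → X} {c : ι → M} (hD : ∀ i μ x, P μ x → P (μ + c i) (D i x)) (m : ι → ℕ)
    (l : List ι) {μ : M} {x : X} (hx : P μ x) :
    P (μ + (l.map fun i => m i • c i).sum) (l.foldr (fun i y => (D i)^[m i] y) x) := by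
  induction l with
  | nil => simpa using hx
  | cons i l ih =>
    rw [List.map_cons, List.sum_cons, add_comm (m i • c i), ← add_assoc]
    exact iterate_of_shift (hD i) (m i) ih

def IsSmoothEigenfunction (T : ((Fin n → ℂ) → ℂ) → (Fin n → ℂ) → ℂ) (μ : ℂ)
    (h : (Fin n → ℂ) → ℂ) : Prop :=
  ContDiff ℝ ∞ h ∧ T h = fun z => μ * h z

lemma IsSmoothEigenfunction.map_wzb {μ : ℂ} (hh : IsSmoothEigenfunction conjTwistedL μ h)
    (k : Fin n) : IsSmoothEigenfunction conjTwistedL μ (wzb n k h) := by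
  refine ⟨contDiff_wirt hh.1 k I, ?_⟩
  rw [conjTwistedL_wzb hh.1, hh.2, wzb_eq_wirt, wirt_const_mul _ _ (hh.1.differentiable (by simp))]

lemma IsSmoothEigenfunction.map_wz {μ : ℂ} (hh : IsSmoothEigenfunction conjTwistedL μ h)
    (k : Fin n) : IsSmoothEigenfunction conjTwistedL (μ + 2) (wz n k h) := by
  have hcomm := conjTwistedL_wz hh.1 k
  rw [wz_eq_wirt] at hcomm ⊢
  refine ⟨contDiff_wirt hh.1 k (-I), ?_⟩
  rw [hcomm, hh.2, wirt_const_mul _ _ (hh.1.differentiable (by simp))]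
  ext z; ring

lemma isSmoothEigenfunction_wzMulti_wzbMulti_gauss (α β : Fin n → ℕ) :
    IsSmoothEigenfunction conjTwistedL (n + 2 * (∑ j, α j : ℕ))
      (wzMulti n α (wzbMulti n β (gauss n))) := by
  have h0 : IsSmoothEigenfunction conjTwistedL n (gauss n) :=
    ⟨by unfold gauss; fun_prop, conjTwistedL_gauss⟩
  have hβ := foldr_iterate_of_shift (c := fun _ => (0 : ℂ))
    (fun k _ _ hh => by simpa using hh.map_wzb k) β (List.finRange n) h0
  have hα := foldr_iterate_of_shift (c := fun _ => (2 : ℂ))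
    (fun k _ _ hh => hh.map_wz k) α (List.finRange n) hβ
  convert hα using 1
  · simp [Fin.sum_univ_def, List.sum_map_mul_right, Function.comp_def, mul_comm]
  · rfl

end TwistedLaplacian

theorem stmt9 (n : ℕ) (α β : Fin n → ℕ) (z : Fin n → ℂ) :
    twistedL n (fab n α β) z = ((n : ℂ) + 2 * (∑ j, α j : ℕ)) * fab n α β z := by
  obtain ⟨hsmooth, heig⟩ := TwistedLaplacian.isSmoothEigenfunction_wzMulti_wzbMulti_gauss α β
  unfold fab
  rw [TwistedLaplacian.twistedL_weight_mul hsmooth, heig]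
  ring
end

section
/- For all multi-indices α, β ∈ ℕ^n, the squared L² norm over ℝ^{2n} of f_{α,β}(z) = (−1)^{|α|+|β|} e^{|z|²/2} ∂_z^α ∂_{z̄}^β e^{−|z|²} equals π^n · α! · β!. -/
open MeasureTheory Complex Real

/-
Every function involved factors over the coordinates. In one variable the Wirtinger derivatives
act as ladder operators on `(-1)^(p+q) H_{p,q}(w, w̄) e^{-|w|²}`, where `H_{p,q}` is the complex
Hermite polynomial: `∂_w` raises `q` and `∂_{w̄}` raises `p` when `q = 0`. Hence
`|f_{α,β}(z)|² = ∏_j |H_{β_j,α_j}(z_j)|² e^{-|z_j|²}` and Fubini reduces the claim to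
`∫_ℂ |H_{p,q}|² e^{-|w|²} = π p! q!`. Expanding `|H_{p,q}|²` in powers of `|w|²` and using
`∫_ℂ |w|^{2m} e^{-|w|²} = π m!` turns the integral into `π ∑_{k,l} c_k c_l (p+q-k-l)!`. For
fixed `k` the sum over `l` is a `q`-th finite difference of a polynomial of degree `q - k`,
so it vanishes unless `k = 0`, which leaves `π p! q!`.
-/

open Complex Finset Polynomial ComplexConjugate MeasureTheory

noncomputable section

theorem Polynomial.sum_range_alternating_choose_mul_eval {R : Type*} [CommRing R] (P : R[X])
    {n : ℕ} (hP : P.natDegree ≤ n) :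
    ∑ l ∈ range (n + 1), (-1 : R) ^ l * n.choose l * P.eval (l : R)
      = (-1) ^ n * n.factorial * P.coeff n := by
  have hdiff : (fwdDiff 1)^[n] P.eval 0 = n.factorial * P.coeff n := by
    rcases hP.lt_or_eq with hlt | rfl
    · simp [fwdDiff_iter_eq_zero_of_degree_lt hlt, coeff_eq_zero_of_natDegree_lt hlt]
    · simp [fwdDiff_iter_degree_eq_factorial, mul_comm]
  rw [fwdDiff_iter_eq_sum_shift] at hdiff
  rw [mul_assoc, ← hdiff, mul_sum]
  refine sum_congr rfl fun l hl => ?_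
  have hsign : (-1 : R) ^ l = (-1) ^ n * (-1) ^ (n - l) := by
    rw [← pow_add, show n + (n - l) = l + 2 * (n - l) by grind, pow_add, pow_mul]
    simp
  simp [hsign, zsmul_eq_mul]
  ring

def complexHermiteCoeff (p q k : ℕ) : ℤ := (-1) ^ k * q.choose k * p.descFactorial k

theorem complexHermiteCoeff_of_lt {p q k : ℕ} (h : p < k) : complexHermiteCoeff p q k = 0 := by
  simp [complexHermiteCoeff, Nat.descFactorial_of_lt h]

theorem complexHermiteCoeff_succ_succ (p q k : ℕ) :
    complexHermiteCoeff p (q + 1) (k + 1)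
      = complexHermiteCoeff p q (k + 1) - (p - k : ℕ) * complexHermiteCoeff p q k := by
  simp only [complexHermiteCoeff, Nat.choose_succ_succ, Nat.descFactorial_succ]
  push_cast
  ring

theorem factorial_mul_descFactorial_eq_descFactorial_mul_factorial {p q k l : ℕ} (hkp : k ≤ p)
    (hkq : k ≤ q) (hl : l ≤ q) :
    p.factorial * (p + q - k - l).descFactorial (q - k)
      = p.descFactorial l * (p + q - k - l).factorial := by
  rcases le_or_gt l p with hlp | hpl
  · apply Nat.eq_of_mul_eq_mul_right (Nat.factorial_pos (p - l))
    have h1 := Nat.factorial_mul_descFactorial (show q - k ≤ p + q - k - l by omega)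
    have h2 := Nat.factorial_mul_descFactorial hlp
    rw [show p + q - k - l - (q - k) = p - l by omega] at h1
    calc _ = p.factorial * ((p - l).factorial * (p + q - k - l).descFactorial (q - k)) := by ring
      _ = ((p - l).factorial * p.descFactorial l) * (p + q - k - l).factorial := by
        rw [h1, h2, mul_comm]
      _ = _ := by ring
  · rw [Nat.descFactorial_of_lt (by omega), Nat.descFactorial_of_lt hpl]
    simp

theorem sum_complexHermiteCoeff_mul_factorial {p q k : ℕ} (hkp : k ≤ p) (hkq : k ≤ q) :
    ∑ l ∈ range (q + 1), complexHermiteCoeff p q l * (p + q - k - l).factorial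
      = if k = 0 then (p.factorial * q.factorial : ℤ) else 0 := by
  set P : ℤ[X] :=
    C (p.factorial : ℤ) * (descPochhammer ℤ (q - k)).comp (C ((p + q - k : ℕ) : ℤ) - X)
  have hlin : (C ((p + q - k : ℕ) : ℤ) - X).natDegree = 1 := by
    rw [← neg_sub, natDegree_neg, natDegree_X_sub_C]
  have hlc : (C ((p + q - k : ℕ) : ℤ) - X).leadingCoeff = -1 := by
    rw [← neg_sub, leadingCoeff_neg, leadingCoeff_X_sub_C]
  have hdeg : P.natDegree = q - k := by
    rw [natDegree_C_mul (by positivity), natDegree_comp, hlin, descPochhammer_natDegree, mul_one]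
  have heval : ∀ l ∈ range (q + 1),
      P.eval (l : ℤ) = p.descFactorial l * (p + q - k - l).factorial := by
    intro l hl
    have hl : l ≤ q := Nat.lt_succ_iff.mp (mem_range.mp hl)
    simp only [P, eval_mul, eval_C, eval_comp, eval_sub, eval_X]
    rw [← Nat.cast_sub (by omega), descPochhammer_eval_eq_descFactorial]
    exact_mod_cast factorial_mul_descFactorial_eq_descFactorial_mul_factorial hkp hkq hl
  have hcoeff : P.coeff q = if k = 0 then (-1) ^ q * (p.factorial : ℤ) else 0 := by
    split_ifs with hk0
    · subst hk0
      rw [← hdeg.trans (Nat.sub_zero q), coeff_natDegree, leadingCoeff_mul, leadingCoeff_C,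
        leadingCoeff_comp (by rw [hlin]; norm_num), hlc, (monic_descPochhammer ℤ _).leadingCoeff,
        descPochhammer_natDegree, hdeg, one_mul, mul_comm]
    · exact coeff_eq_zero_of_natDegree_lt (by omega)
  have key := P.sum_range_alternating_choose_mul_eval (n := q) (by omega)
  rw [sum_congr rfl fun l hl => by rw [heval l hl], hcoeff] at key
  simp only [complexHermiteCoeff, mul_assoc] at key ⊢
  rw [key]
  split_ifs
  · have hsq : (-1 : ℤ) ^ q * (-1) ^ q = 1 := by rw [← mul_pow]; norm_num
    linear_combination (p.factorial * q.factorial : ℤ) * hsq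
  · simp

theorem sum_sum_complexHermiteCoeff_mul_factorial (p q : ℕ) :
    ∑ k ∈ range (q + 1), ∑ l ∈ range (q + 1),
      complexHermiteCoeff p q k * complexHermiteCoeff p q l * (p + q - k - l).factorial
      = p.factorial * q.factorial := by
  have inner : ∀ k ∈ range (q + 1), ∑ l ∈ range (q + 1),
      complexHermiteCoeff p q k * complexHermiteCoeff p q l * (p + q - k - l).factorial
        = complexHermiteCoeff p q k * if k = 0 then (p.factorial * q.factorial : ℤ) else 0 := by
    intro k hk
    simp_rw [mul_assoc, ← mul_sum]
    rcases le_or_gt k p with hkp | hpk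
    · rw [sum_complexHermiteCoeff_mul_factorial hkp (Nat.lt_succ_iff.mp (mem_range.mp hk))]
    · simp [complexHermiteCoeff_of_lt hpk]
  rw [sum_congr rfl inner, sum_eq_single_of_mem 0 (by simp) (fun k _ hk => by simp [hk])]
  simp [complexHermiteCoeff]

section OneVariable

/-- `wirtinger (-I)` is `∂_w` and `wirtinger I` is `∂_{w̄}`. -/
def wirtinger (s : ℂ) (f : ℂ → ℂ) (w : ℂ) : ℂ :=
  (1 / 2) * (fderiv ℝ f w 1 + s * fderiv ℝ f w I)

variable {s : ℂ} {f g : ℂ → ℂ} {w : ℂ}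

theorem wirtinger_mul (hf : DifferentiableAt ℝ f w) (hg : DifferentiableAt ℝ g w) :
    wirtinger s (fun x => f x * g x) w = wirtinger s f w * g w + f w * wirtinger s g w := by
  simp only [wirtinger, fderiv_fun_mul hf hg, add_apply, smul_apply, smul_eq_mul]
  ring

theorem wirtinger_const_mul (c : ℂ) (hf : DifferentiableAt ℝ f w) :
    wirtinger s (fun x => c * f x) w = c * wirtinger s f w := by
  simp only [wirtinger, fderiv_const_mul hf, smul_apply, smul_eq_mul]
  ring

theorem wirtinger_sum {ι : Type*} (t : Finset ι) {F : ι → ℂ → ℂ}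
    (hF : ∀ i ∈ t, DifferentiableAt ℝ (F i) w) :
    wirtinger s (fun x => ∑ i ∈ t, F i x) w = ∑ i ∈ t, wirtinger s (F i) w := by
  simp only [wirtinger, fderiv_fun_sum hF, _root_.sum_apply, ← sum_add_distrib, mul_sum]

theorem wirtinger_cexp (hf : DifferentiableAt ℝ f w) :
    wirtinger s (fun x => cexp (f x)) w = cexp (f w) * wirtinger s f w := by
  simp only [wirtinger, hf.hasFDerivAt.cexp.fderiv, smul_apply, smul_eq_mul]
  ring

theorem fderiv_real_apply_eq_deriv_mul (hf : DifferentiableAt ℂ f w) (v : ℂ) :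
    fderiv ℝ f w v = deriv f w * v := by
  rw [hf.fderiv_restrictScalars ℝ, ContinuousLinearMap.coe_restrictScalars',
    ← fderiv_apply_one_eq_deriv, mul_comm, ← smul_eq_mul, ← ContinuousLinearMap.map_smul,
    smul_eq_mul, mul_one]

theorem wirtinger_of_differentiableAt (hf : DifferentiableAt ℂ f w) :
    wirtinger s f w = (1 + s * I) / 2 * deriv f w := by
  simp only [wirtinger, fderiv_real_apply_eq_deriv_mul hf]
  ring

theorem wirtinger_conj (hg : DifferentiableAt ℂ g w) :
    wirtinger s (fun x => conj (g x)) w = (1 - s * I) / 2 * conj (deriv g w) := by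
  have h : ∀ v, fderiv ℝ (fun x => conj (g x)) w v = conj (deriv g w * v) := fun v => by
    rw [← fderiv_real_apply_eq_deriv_mul hg]
    exact congrArg (· v) ((conjCLE.hasFDerivAt.comp w (hg.restrictScalars ℝ).hasFDerivAt).fderiv)
  simp only [wirtinger, h, map_mul, conj_I, map_one]
  ring

@[fun_prop]
theorem Differentiable.conj (hg : Differentiable ℝ g) :
    Differentiable ℝ (fun x => conj (g x)) :=
  conjCLE.differentiable.comp hg

theorem wirtinger_monomial (p q : ℕ) :
    wirtinger s (fun x => x ^ p * conj x ^ q) w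
      = (1 + s * I) / 2 * (p * w ^ (p - 1) * conj w ^ q)
        + (1 - s * I) / 2 * (q * w ^ p * conj w ^ (q - 1)) := by
  simp_rw [← map_pow]
  rw [wirtinger_mul (by fun_prop) (by fun_prop),
    wirtinger_of_differentiableAt (by fun_prop), wirtinger_conj (by fun_prop)]
  simp only [deriv_pow_field, map_mul, map_natCast, map_pow]
  ring

theorem wirtinger_neg_I_monomial (p q : ℕ) :
    wirtinger (-I) (fun x => x ^ p * conj x ^ q) w = p * w ^ (p - 1) * conj w ^ q := by
  simp [wirtinger_monomial]

theorem wirtinger_I_monomial (p q : ℕ) :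
    wirtinger I (fun x => x ^ p * conj x ^ q) w = q * w ^ p * conj w ^ (q - 1) := by
  simp [wirtinger_monomial]

def gaussian (w : ℂ) : ℂ := cexp (-(w * conj w))

/-- The complex Hermite polynomial
`H_{p,q}(w, w̄) = ∑ₖ (-1)ᵏ k! (p choose k) (q choose k) w^(p-k) w̄^(q-k)`. -/
def complexHermite (p q : ℕ) (w : ℂ) : ℂ :=
  ∑ k ∈ range (q + 1), (complexHermiteCoeff p q k : ℂ) * w ^ (p - k) * conj w ^ (q - k)

def hermiteGauss (p q : ℕ) (w : ℂ) : ℂ := (-1) ^ (p + q) * complexHermite p q w * gaussian w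

@[fun_prop]
theorem differentiable_gaussian : Differentiable ℝ gaussian := by
  unfold gaussian; fun_prop

@[fun_prop]
theorem differentiable_complexHermite (p q : ℕ) : Differentiable ℝ (complexHermite p q) := by
  unfold complexHermite; fun_prop

@[fun_prop]
theorem differentiable_hermiteGauss (p q : ℕ) : Differentiable ℝ (hermiteGauss p q) := by
  unfold hermiteGauss; fun_prop

theorem wirtinger_gaussian :
    wirtinger s gaussian w = -((1 + s * I) / 2 * conj w + (1 - s * I) / 2 * w) * gaussian w := by
  have h : (fun x : ℂ => -(x * conj x)) = fun x => -1 * (x ^ 1 * conj x ^ 1) := by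
    funext x; ring
  rw [show gaussian = fun x => cexp (-(x * conj x)) from rfl, wirtinger_cexp (by fun_prop), h,
    wirtinger_const_mul _ (by fun_prop), wirtinger_monomial]
  ring

theorem complexHermite_zero_right (p : ℕ) (w : ℂ) : complexHermite p 0 w = w ^ p := by
  simp [complexHermite, complexHermiteCoeff]

theorem wirtinger_neg_I_complexHermite (p q : ℕ) :
    wirtinger (-I) (complexHermite p q) w
      = ∑ k ∈ range (q + 1), (complexHermiteCoeff p q k : ℂ)
          * ((p - k : ℕ) * w ^ (p - k - 1) * conj w ^ (q - k)) := by
  rw [show complexHermite p q = fun x => ∑ k ∈ range (q + 1),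
      (complexHermiteCoeff p q k : ℂ) * (x ^ (p - k) * conj x ^ (q - k)) by
    funext x; simp only [complexHermite, mul_assoc]]
  rw [wirtinger_sum _ (fun k _ => by fun_prop)]
  refine sum_congr rfl fun k _ => ?_
  rw [wirtinger_const_mul _ (by fun_prop), wirtinger_neg_I_monomial]

theorem complexHermite_succ_right (p q : ℕ) (w : ℂ) :
    complexHermite p (q + 1) w
      = conj w * complexHermite p q w
        - ∑ k ∈ range (q + 1), (complexHermiteCoeff p q k : ℂ)
            * ((p - k : ℕ) * w ^ (p - k - 1) * conj w ^ (q - k)) := by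
  have hc0 : ∀ r, complexHermiteCoeff p r 0 = 1 := by simp [complexHermiteCoeff]
  have hshift : ∑ k ∈ range (q + 1), (complexHermiteCoeff p q (k + 1) : ℂ)
        * w ^ (p - (k + 1)) * conj w ^ (q - k) + w ^ p * conj w ^ (q + 1)
      = conj w * complexHermite p q w := by
    have htop : complexHermiteCoeff p q (q + 1) = 0 := by simp [complexHermiteCoeff]
    calc _ = ∑ k ∈ range (q + 2), (complexHermiteCoeff p q k : ℂ)
          * w ^ (p - k) * conj w ^ (q + 1 - k) := by
          rw [sum_range_succ' _ (q + 1)]; simp [hc0]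
      _ = ∑ k ∈ range (q + 1), (complexHermiteCoeff p q k : ℂ)
          * w ^ (p - k) * conj w ^ (q + 1 - k) := by
          rw [sum_range_succ, htop]; simp
      _ = _ := by
        rw [complexHermite, mul_sum]
        refine sum_congr rfl fun k hk => ?_
        rw [show q + 1 - k = q - k + 1 by grind, pow_succ]
        ring
  rw [complexHermite, sum_range_succ', ← hshift]
  simp_rw [complexHermiteCoeff_succ_succ, hc0, Nat.sub_sub]
  push_cast
  simp only [sub_mul, sum_sub_distrib, Nat.sub_zero, one_mul]
  rw [sub_add_eq_add_sub]
  exact congrArg _ (sum_congr rfl fun k _ => by ring)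

theorem wirtinger_neg_I_hermiteGauss (p q : ℕ) :
    wirtinger (-I) (hermiteGauss p q) = hermiteGauss p (q + 1) := by
  funext w
  have h : hermiteGauss p q = fun x => (-1) ^ (p + q) * (complexHermite p q x * gaussian x) := by
    funext x; rw [hermiteGauss, mul_assoc]
  rw [h, wirtinger_const_mul _ (by fun_prop), wirtinger_mul (by fun_prop) (by fun_prop),
    wirtinger_neg_I_complexHermite, wirtinger_gaussian, hermiteGauss, complexHermite_succ_right]
  simp only [neg_mul, I_mul_I]
  ring

theorem wirtinger_I_hermiteGauss_zero_right (p : ℕ) :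
    wirtinger I (hermiteGauss p 0) = hermiteGauss (p + 1) 0 := by
  funext w
  have h : hermiteGauss p 0 = fun x => (-1) ^ p * ((x ^ p * conj x ^ 0) * gaussian x) := by
    funext x; simp [hermiteGauss, complexHermite_zero_right, mul_assoc]
  rw [h, wirtinger_const_mul _ (by fun_prop), wirtinger_mul (by fun_prop) (by fun_prop),
    wirtinger_I_monomial, wirtinger_gaussian, hermiteGauss, complexHermite_zero_right]
  simp only [I_mul_I]
  ring

theorem integral_normSq_pow_mul_exp_neg_normSq (m : ℕ) :
    ∫ w : ℂ, normSq w ^ m * Real.exp (-normSq w) = Real.pi * m.factorial := by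
  have h := Complex.integral_rpow_mul_exp_neg_rpow (p := 2) (q := 2 * m) one_le_two
    (by linarith [(Nat.cast_nonneg m : (0 : ℝ) ≤ m)])
  have hfun : (fun w : ℂ => ‖w‖ ^ (2 * m : ℝ) * Real.exp (-‖w‖ ^ (2 : ℝ)))
      = fun w => normSq w ^ m * Real.exp (-normSq w) := by
    funext w
    rw [normSq_eq_norm_sq, ← pow_mul, ← Real.rpow_natCast, ← Real.rpow_two]
    push_cast; ring_nf
  rw [hfun] at h
  rw [h, show (2 * m + 2 : ℝ) / 2 = m + 1 by ring, Real.Gamma_nat_eq_factorial]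
  ring

theorem complexHermite_mul_conj (p q : ℕ) (w : ℂ) :
    complexHermite p q w * conj (complexHermite p q w)
      = ((∑ k ∈ range (q + 1), ∑ l ∈ range (q + 1),
          ((complexHermiteCoeff p q k * complexHermiteCoeff p q l : ℤ) : ℝ)
            * normSq w ^ (p + q - k - l) : ℝ) : ℂ) := by
  rw [complexHermite, map_sum, sum_mul_sum]
  push_cast
  refine sum_congr rfl fun k hk => sum_congr rfl fun l hl => ?_
  have hk : k ≤ q := Nat.lt_succ_iff.mp (mem_range.mp hk)
  have hl : l ≤ q := Nat.lt_succ_iff.mp (mem_range.mp hl)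
  rcases le_or_gt k p with hkp | hpk
  · rcases le_or_gt l p with hlp | hpl
    · have hw : w ^ (p + q - k - l) = w ^ (p - k) * w ^ (q - l) := by
        rw [← pow_add]; congr 1; omega
      have hw' : conj w ^ (p + q - k - l) = conj w ^ (q - k) * conj w ^ (p - l) := by
        rw [← pow_add]; congr 1; omega
      rw [← mul_conj, mul_pow, hw, hw']
      simp only [map_mul, map_pow, conj_conj, map_intCast]
      ring
    · simp [complexHermiteCoeff_of_lt hpl]
  · simp [complexHermiteCoeff_of_lt hpk]

theorem norm_complexHermite_sq (p q : ℕ) (w : ℂ) :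
    ‖complexHermite p q w‖ ^ 2 = ∑ k ∈ range (q + 1), ∑ l ∈ range (q + 1),
      ((complexHermiteCoeff p q k * complexHermiteCoeff p q l : ℤ) : ℝ)
        * normSq w ^ (p + q - k - l) := by
  exact_mod_cast (mul_conj' (complexHermite p q w)).symm.trans (complexHermite_mul_conj p q w)

theorem integral_norm_complexHermite_sq_mul_exp (p q : ℕ) :
    ∫ w : ℂ, ‖complexHermite p q w‖ ^ 2 * Real.exp (-normSq w)
      = Real.pi * p.factorial * q.factorial := by
  -- a function whose integral is nonzero is integrable
  have hint : ∀ m : ℕ, Integrable fun w : ℂ => normSq w ^ m * Real.exp (-normSq w) := fun m =>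
    .of_integral_ne_zero (by rw [integral_normSq_pow_mul_exp_neg_normSq]; positivity)
  have hcomb : ∑ k ∈ range (q + 1), ∑ l ∈ range (q + 1),
      ((complexHermiteCoeff p q k * complexHermiteCoeff p q l : ℤ) : ℝ)
        * (p + q - k - l).factorial
        = p.factorial * q.factorial := by
    exact_mod_cast sum_sum_complexHermiteCoeff_mul_factorial p q
  simp_rw [norm_complexHermite_sq, sum_mul, mul_assoc]
  rw [integral_finsetSum _ fun k _ => integrable_finsetSum _ fun l _ => (hint _).const_mul _]
  simp_rw [integral_finsetSum _ fun l _ => (hint _).const_mul _, integral_const_mul,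
    integral_normSq_pow_mul_exp_neg_normSq]
  rw [← hcomb, mul_sum]
  refine sum_congr rfl fun k _ => ?_
  rw [mul_sum]
  exact sum_congr rfl fun l _ => by ring

end OneVariable

theorem List.foldr_iterate_eq_of_apply_eq_add_single {X ι : Type*} [DecidableEq ι]
    (T : ι → X → X) (P : (ι → ℕ) → X) (hT : ∀ j A, T j (P A) = P (A + Pi.single j 1))
    (α : ι → ℕ) (L : List ι) (A : ι → ℕ) :
    L.foldr (fun j g => (T j)^[α j] g) (P A)
      = P (A + (L.map fun j => Pi.single j (α j)).sum) := by
  have hiter : ∀ j m A, (T j)^[m] (P A) = P (A + Pi.single j m) := by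
    intro j m A
    induction m with
    | zero => simp
    | succ m ih => rw [Function.iterate_succ_apply', ih, hT, add_assoc, ← Pi.single_add]
  induction L with
  | nil => simp
  | cons j L ih =>
    rw [List.foldr_cons, ih, hiter, List.map_cons, List.sum_cons, add_assoc,
      add_comm (Pi.single _ _)]

theorem fderiv_prod_apply_single {ι : Type*} [Fintype ι] [DecidableEq ι] {g : ι → ℂ → ℂ}
    {z : ι → ℂ} (hg : ∀ i, DifferentiableAt ℝ (g i) (z i)) (j : ι) (v : ℂ) :
    fderiv ℝ (fun z => ∏ i, g i (z i)) z (Pi.single j v)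
      = fderiv ℝ (g j) (z j) v * ∏ i ∈ univ.erase j, g i (z i) := by
  have hG : ∀ i ∈ univ, HasFDerivAt (fun z : ι → ℂ => g i (z i))
      ((fderiv ℝ (g i) (z i)).comp (ContinuousLinearMap.proj i)) z :=
    fun i _ => (hg i).hasFDerivAt.comp z (hasFDerivAt_apply i z)
  rw [(HasFDerivAt.finsetProd hG).fderiv, _root_.sum_apply,
    sum_eq_single j (fun i _ hij => by simp [Pi.single_eq_of_ne hij]) (by simp)]
  simp [mul_comm]

theorem half_pdx_add_mul_pdy_prod {n : ℕ} (s : ℂ) {g : Fin n → ℂ → ℂ}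
    (hg : ∀ i, Differentiable ℝ (g i)) (j : Fin n) (z : Fin n → ℂ) :
    (1 / 2) * (pdx n j (fun z => ∏ i, g i (z i)) z + s * pdy n j (fun z => ∏ i, g i (z i)) z)
      = wirtinger s (g j) (z j) * ∏ i ∈ univ.erase j, g i (z i) := by
  simp only [pdx, pdy, fderiv_prod_apply_single (fun i => (hg i).differentiableAt), wirtinger]
  ring

theorem half_pdx_add_mul_pdy_prod_eq_add_single {n : ℕ} (s : ℂ) {F : Fin n → ℕ → ℂ → ℂ}
    (hF : ∀ i a, Differentiable ℝ (F i a)) (hraise : ∀ i a, wirtinger s (F i a) = F i (a + 1))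
    (A : Fin n → ℕ) (j : Fin n) :
    (fun z => (1 / 2) * (pdx n j (fun z => ∏ i, F i (A i) (z i)) z
        + s * pdy n j (fun z => ∏ i, F i (A i) (z i)) z))
      = fun z => ∏ i, F i ((A + Pi.single j 1 : Fin n → ℕ) i) (z i) := by
  funext z
  rw [half_pdx_add_mul_pdy_prod s (fun i => hF i (A i)), hraise,
    ← mul_prod_erase univ _ (mem_univ j)]
  congr 1
  · simp
  · exact prod_congr rfl fun i hi => by simp [ne_of_mem_erase hi]

theorem wzMulti_prod {n : ℕ} {F : Fin n → ℕ → ℂ → ℂ}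
    (hF : ∀ i a, Differentiable ℝ (F i a))
    (hraise : ∀ i a, wirtinger (-I) (F i a) = F i (a + 1)) (α A : Fin n → ℕ) :
    wzMulti n α (fun z => ∏ i, F i (A i) (z i)) = fun z => ∏ i, F i (A i + α i) (z i) := by
  have hT : ∀ j (A : Fin n → ℕ), wz n j (fun z => ∏ i, F i (A i) (z i))
      = fun z => ∏ i, F i ((A + Pi.single j 1 : Fin n → ℕ) i) (z i) := fun j A => by
    rw [← half_pdx_add_mul_pdy_prod_eq_add_single _ hF hraise]
    simp only [neg_mul, ← sub_eq_add_neg]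
    rfl
  rw [wzMulti, List.foldr_iterate_eq_of_apply_eq_add_single _ _ hT, ← Fin.sum_univ_def,
    univ_sum_single]
  rfl

theorem wzbMulti_prod {n : ℕ} {F : Fin n → ℕ → ℂ → ℂ}
    (hF : ∀ i a, Differentiable ℝ (F i a))
    (hraise : ∀ i a, wirtinger I (F i a) = F i (a + 1)) (β B : Fin n → ℕ) :
    wzbMulti n β (fun z => ∏ i, F i (B i) (z i)) = fun z => ∏ i, F i (B i + β i) (z i) := by
  have hT : ∀ j (B : Fin n → ℕ), wzb n j (fun z => ∏ i, F i (B i) (z i))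
      = fun z => ∏ i, F i ((B + Pi.single j 1 : Fin n → ℕ) i) (z i) := fun j B =>
    half_pdx_add_mul_pdy_prod_eq_add_single _ hF hraise B j
  rw [wzbMulti, List.foldr_iterate_eq_of_apply_eq_add_single _ _ hT, ← Fin.sum_univ_def,
    univ_sum_single]
  rfl

theorem gauss_eq_prod (n : ℕ) : gauss n = fun z => ∏ i, hermiteGauss 0 0 (z i) := by
  funext z
  simp only [gauss, normSq2, hermiteGauss, complexHermite, gaussian, mul_conj]
  push_cast
  simp [complexHermiteCoeff, ← Complex.exp_sum]

theorem wzMulti_wzbMulti_gauss (n : ℕ) (α β : Fin n → ℕ) :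
    wzMulti n α (wzbMulti n β (gauss n)) = fun z => ∏ i, hermiteGauss (β i) (α i) (z i) := by
  have hb := wzbMulti_prod (F := fun _ p => hermiteGauss p 0) (fun _ _ => by fun_prop)
    (fun _ => wirtinger_I_hermiteGauss_zero_right) β 0
  have ha := wzMulti_prod (F := fun i q => hermiteGauss (β i) q) (fun _ _ => by fun_prop)
    (fun _ => wirtinger_neg_I_hermiteGauss _) α 0
  simp only [Pi.zero_apply, zero_add] at ha hb
  rw [gauss_eq_prod, hb, ha]

theorem norm_hermiteGauss (p q : ℕ) (w : ℂ) :
    ‖hermiteGauss p q w‖ = ‖complexHermite p q w‖ * Real.exp (-normSq w) := by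
  simp [hermiteGauss, gaussian, norm_exp, mul_conj, ← ofReal_neg]

theorem norm_fab_sq (n : ℕ) (α β : Fin n → ℕ) (z : Fin n → ℂ) :
    ‖fab n α β z‖ ^ 2
      = ∏ i, ‖complexHermite (β i) (α i) (z i)‖ ^ 2 * Real.exp (-normSq (z i)) := by
  rw [fab, wzMulti_wzbMulti_gauss]
  simp only [norm_mul, norm_pow, norm_neg, norm_one, one_pow, one_mul, norm_prod,
    norm_hermiteGauss, norm_exp, normSq2]
  rw [← ofReal_ofNat, ← ofReal_div, ofReal_re, sum_div, Real.exp_sum, ← prod_mul_distrib,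
    ← prod_pow]
  refine prod_congr rfl fun i _ => ?_
  calc _ = ‖complexHermite (β i) (α i) (z i)‖ ^ 2 * (Real.exp (normSq (z i) / 2)
        * Real.exp (normSq (z i) / 2) * Real.exp (-normSq (z i)) * Real.exp (-normSq (z i))) := by
        ring
    _ = _ := by simp only [← Real.exp_add]; ring_nf

end

theorem stmt10 (n : ℕ) (α β : Fin n → ℕ) :
    ∫ z : Fin n → ℂ, ‖fab n α β z‖ ^ 2 =
      Real.pi ^ n * (∏ j, Nat.factorial (α j)) * (∏ j, Nat.factorial (β j)) := by
  simp_rw [norm_fab_sq]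
  rw [integral_fintype_prod_volume_eq_prod
    (fun i w => ‖complexHermite (β i) (α i) w‖ ^ 2 * Real.exp (-normSq w))]
  simp_rw [integral_norm_complexHermite_sq_mul_exp, prod_mul_distrib, prod_const, card_univ,
    Fintype.card_fin]
  push_cast
  ring
end
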